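/- Let X be the generic 6×6 symmetric matrix with entries x_{ij} = x_{ji}, labeled as a=x11, b=x12, c=x13, d=x14, e=x15, f=x16, g=x22, h=x23, i=x24, j=x25, k=x26, l=x33, m=x34, n=x35, o=x36, p=x44, q=x45, r=x46, s=x55, t=x56, u=x66, over a field of characteristic 0. Then the degree-three differential operator E·I·O − D·J·O − E·H·R + C·J·R + D·H·T − C·I·T (where each capital letter denotes the partial derivative with respect to the corresponding lowercase variable) annihilates perm(X). -/

import Mathlib

open MvPolynomial

/-- The permanent of the generic symmetric `6×6` matrix. -/
noncomputable def symPerm6 (K : Type*) [Field K] : MvPolynomial (Sym2 (Fin 6)) K :=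
  ∑ σ : Equiv.Perm (Fin 6), ∏ i : Fin 6, X s(i, σ i)

/-!
The operator is the `3 × 3` minor with rows `1, 2, 6` and columns `5, 4, 3` (0-based: `![0, 1, 5]`
and `![4, 3, 2]`) of the symmetric matrix `(∂/∂x_{ij})`, and every `k × k` minor
`∑_τ sgn τ ∏_j ∂/∂x_{r_j, c_{τ j}}` with `k ≥ 3` and disjoint row and column sets kills the
permanent. Applied to the monomial `∏_i x_{i,σ i}`, the term of `τ` leaves the product of the
remaining entries once for every orientation `ε` of the edges `{r_j, c_{τ j}}` such that `σ` maps
the tail of each edge to its head. Since `k ≥ 3`, two edges `a ≠ b` are oriented alike; exchanging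
them in `τ` and their tails in `σ` is an involution on the pairs `(τ, σ)` compatible with `ε` that
keeps the monomial and reverses the sign of `τ`.
-/

open Equiv Finset Function

section IteratedPderiv

variable {ι R : Type*} [CommSemiring R]

noncomputable def iteratedPderiv : {k : ℕ} → (Fin k → ι) →
    MvPolynomial ι R →ₗ[R] MvPolynomial ι R
  | 0, _ => LinearMap.id
  | _ + 1, v => (pderiv (v 0)).toLinearMap ∘ₗ iteratedPderiv (Fin.tail v)

theorem iteratedPderiv_succ_apply {k : ℕ} (v : Fin (k + 1) → ι) (p : MvPolynomial ι R) :
    iteratedPderiv v p = pderiv (v 0) (iteratedPderiv (Fin.tail v) p) := rfl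

theorem iteratedPderiv_fin_three_apply (v : Fin 3 → ι) (p : MvPolynomial ι R) :
    iteratedPderiv v p = pderiv (v 0) (pderiv (v 1) (pderiv (v 2) p)) := rfl

theorem iteratedPderiv_monomial [DecidableEq ι] {k : ℕ} {v : Fin k → ι} (hv : Injective v)
    (e : ι →₀ ℕ) (a : R) :
    iteratedPderiv v (monomial e a) =
      monomial (e - ∑ j, Finsupp.single (v j) 1) (a * ∏ j, (e (v j) : R)) := by
  induction k with
  | zero => simp [iteratedPderiv]
  | succ k ih =>
    have htail : (∑ j, Finsupp.single (Fin.tail v j) 1 : ι →₀ ℕ) (v 0) = 0 := by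
      simp [Finsupp.finsetSum_apply, Fin.tail, hv.eq_iff]
    rw [iteratedPderiv_succ_apply, ih (v := Fin.tail v) (hv.comp (Fin.succ_injective k)),
      pderiv_monomial, Finsupp.tsub_apply, htail, tsub_zero, tsub_tsub, Fin.sum_univ_succ,
      Fin.prod_univ_succ, add_comm (Finsupp.single (v 0) 1)]
    congr 1
    simp only [Fin.tail]
    ring

end IteratedPderiv

theorem sum_univ_perm_fin_three {M : Type*} [AddCommMonoid M] (f : Perm (Fin 3) → M) :
    ∑ τ, f τ = f 1 + f (swap 0 1) + f (swap 0 2) + f (swap 1 2) + f (swap 0 1 * swap 1 2)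
      + f (swap 1 2 * swap 0 1) := by
  rw [show (univ : Finset (Perm (Fin 3))) =
    {1, swap 0 1, swap 0 2, swap 1 2, swap 0 1 * swap 1 2, swap 1 2 * swap 0 1} by decide]
  repeat rw [sum_insert (by decide)]
  rw [sum_singleton]
  abel

theorem Function.Injective.sum_elim_comp_perm {α β γ : Type*} {r : β → α} {c : γ → α}
    (h : Injective (Sum.elim r c)) (τ : Perm γ) : Injective (Sum.elim r (c ∘ τ)) := by
  have := h.comp (Sum.map_injective.2 ⟨injective_id, τ.injective⟩)
  rwa [Sum.elim_comp_map, comp_id] at this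

section Orientation

variable {α ι : Type*}

def arcTail (x y : ι → α) (ε : ι → Bool) (j : ι) : α := cond (ε j) (x j) (y j)

def arcHead (x y : ι → α) (ε : ι → Bool) (j : ι) : α := cond (ε j) (y j) (x j)

variable {x y : ι → α} {ε : ι → Bool}

theorem sym2_arcTail_arcHead (j : ι) : s(arcTail x y ε j, arcHead x y ε j) = s(x j, y j) := by
  cases h : ε j <;> simp [arcTail, arcHead, h, Sym2.eq_swap]

theorem arcTail_injective (h : Injective (Sum.elim x y)) : Injective (arcTail x y ε) := by
  have hsum : ∀ i, arcTail x y ε i = Sum.elim x y (cond (ε i) (.inl i) (.inr i)) := fun i => by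
    unfold arcTail; cases ε i <;> rfl
  intro i j hij
  rw [hsum, hsum] at hij
  have := h hij
  cases hi : ε i <;> cases hj : ε j <;> simp_all

variable [DecidableEq ι] {a b : ι}

theorem arcTail_comp_swap (hab : ε a = ε b) :
    arcTail x (y ∘ swap a b) ε = cond (ε a) (arcTail x y ε) (arcTail x y ε ∘ swap a b) := by
  funext j
  unfold arcTail
  rcases eq_or_ne j a with rfl | hja
  · cases h : ε j <;> simp_all
  rcases eq_or_ne j b with rfl | hjb
  · cases h : ε j <;> simp_all
  cases ε a <;> simp [swap_apply_of_ne_of_ne hja hjb]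

theorem arcHead_comp_swap (hab : ε a = ε b) :
    arcHead x (y ∘ swap a b) ε = cond (ε a) (arcHead x y ε ∘ swap a b) (arcHead x y ε) := by
  funext j
  unfold arcHead
  rcases eq_or_ne j a with rfl | hja
  · cases h : ε j <;> simp_all
  rcases eq_or_ne j b with rfl | hjb
  · cases h : ε j <;> simp_all
  cases ε a <;> simp [swap_apply_of_ne_of_ne hja hjb]

variable [DecidableEq α]

theorem arcTail_mul_swap_apply (h : Injective (Sum.elim x y)) (hab : ε a = ε b) {σ : Perm α}
    (hσ : ∀ j, σ (arcTail x y ε j) = arcHead x y ε j) (j : ι) :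
    (σ * swap (arcTail x y ε a) (arcTail x y ε b)) (arcTail x (y ∘ swap a b) ε j) =
      arcHead x (y ∘ swap a b) ε j := by
  have hswap := (arcTail_injective (ε := ε) h).swap_apply a b
  rw [arcTail_comp_swap hab, arcHead_comp_swap hab]
  cases ε a <;> simp [hswap, hσ]

theorem swap_arcTail_comp_swap (hab : ε a = ε b) :
    swap (arcTail x (y ∘ swap a b) ε a) (arcTail x (y ∘ swap a b) ε b) =
      swap (arcTail x y ε a) (arcTail x y ε b) := by
  rw [arcTail_comp_swap hab]
  cases ε a
  · simp [swap_comm]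
  · rfl

theorem image_arcTail_comp_swap [Fintype ι] (hab : ε a = ε b) :
    univ.image (arcTail x (y ∘ swap a b) ε) = univ.image (arcTail x y ε) := by
  rw [arcTail_comp_swap hab]
  cases ε a
  · rw [cond_false, ← image_image, image_univ_equiv]
  · rfl

end Orientation

section SymmetricPermanent

variable (α K : Type*) [Fintype α] [DecidableEq α] [CommRing K]

noncomputable def symPerm : MvPolynomial (Sym2 α) K :=
  ∑ σ : Perm α, ∏ i, X s(i, σ i)

variable {α K}

noncomputable def permExponent (σ : Perm α) : Sym2 α →₀ ℕ :=
  ∑ i, Finsupp.single s(i, σ i) 1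

theorem symPerm_eq_sum_monomial :
    symPerm α K = ∑ σ : Perm α, monomial (permExponent σ) 1 := by
  simp only [symPerm, permExponent, monomial_sum_one]
  rfl

theorem permExponent_apply_mk (σ : Perm α) {x y : α} (hxy : x ≠ y) :
    permExponent σ s(x, y) = ∑ b : Bool, if σ (cond b x y) = cond b y x then 1 else 0 := by
  simp only [permExponent, Finsupp.finsetSum_apply, Finsupp.single_apply, Sym2.eq_iff,
    Fintype.sum_bool, cond_true, cond_false]
  rw [Fintype.sum_eq_add x y hxy (fun i hi => by simp [hi.1, hi.2])]
  simp [hxy, hxy.symm]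

variable {ι : Type*} [Fintype ι] {x y : ι → α}

theorem prod_permExponent_eq_sum_arcs [DecidableEq ι] (σ : Perm α) (hxy : ∀ j, x j ≠ y j) :
    ∏ j, (permExponent σ s(x j, y j) : K) =
      ∑ ε : ι → Bool, if ∀ j, σ (arcTail x y ε j) = arcHead x y ε j then 1 else 0 := by
  simp only [permExponent_apply_mk σ (hxy _), Nat.cast_sum, Nat.cast_ite, Nat.cast_one,
    Nat.cast_zero, Fintype.prod_sum, Fintype.prod_boole]
  congr!

theorem sum_compl_image_arcTail {ε : ι → Bool} (h : Injective (Sum.elim x y)) {σ : Perm α}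
    (hσ : ∀ j, σ (arcTail x y ε j) = arcHead x y ε j) :
    ∑ i ∈ (univ.image (arcTail x y ε))ᶜ, Finsupp.single s(i, σ i) 1 =
      permExponent σ - ∑ j, Finsupp.single s(x j, y j) 1 := by
  rw [permExponent, ← sum_compl_add_sum (univ.image (arcTail x y ε)),
    sum_image fun i _ j _ hij => arcTail_injective h hij]
  simp only [hσ, sym2_arcTail_arcHead, add_tsub_cancel_right]

variable {k : ℕ}

theorem iteratedPderiv_symPerm {x y : Fin k → α} (h : Injective (Sum.elim x y)) :
    iteratedPderiv (fun j => s(x j, y j)) (symPerm α K) =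
      ∑ ε : Fin k → Bool, ∑ σ : Perm α,
        if ∀ j, σ (arcTail x y ε j) = arcHead x y ε j then
          ∏ i ∈ (univ.image (arcTail x y ε))ᶜ, X s(i, σ i) else 0 := by
  have hxy : ∀ j, x j ≠ y j := fun j => h.ne Sum.inl_ne_inr
  have hedge : Injective fun j => s(x j, y j) := by
    intro i j hij
    rcases Sym2.eq_iff.mp hij with ⟨hx, -⟩ | ⟨hx, -⟩
    · exact Sum.inl_injective (h (a₁ := .inl i) (a₂ := .inl j) hx)
    · exact absurd (h (a₁ := .inl i) (a₂ := .inr j) hx) Sum.inl_ne_inr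
  rw [symPerm_eq_sum_monomial, map_sum, sum_comm]
  refine sum_congr rfl fun σ _ => ?_
  rw [iteratedPderiv_monomial hedge, one_mul, prod_permExponent_eq_sum_arcs σ hxy, map_sum]
  refine sum_congr rfl fun ε _ => ?_
  split_ifs with hσ
  · rw [← sum_compl_image_arcTail h hσ, monomial_sum_one]
    rfl
  · exact map_zero _

noncomputable def pderivMinor (r c : Fin k → α) :
    MvPolynomial (Sym2 α) K →ₗ[K] MvPolynomial (Sym2 α) K :=
  ∑ τ : Perm (Fin k), Perm.sign τ • iteratedPderiv fun j => s(r j, c (τ j))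

theorem sum_sign_smul_arcs_eq_zero {r c : Fin k → α} (h : Injective (Sum.elim r c))
    {ε : Fin k → Bool} {a b : Fin k} (hab : a ≠ b) (hε : ε a = ε b) :
    ∑ τ : Perm (Fin k), ∑ σ : Perm α, Perm.sign τ •
      (if ∀ j, σ (arcTail r (c ∘ τ) ε j) = arcHead r (c ∘ τ) ε j then
        ∏ i ∈ (univ.image (arcTail r (c ∘ τ) ε))ᶜ, X s(i, σ i) else 0 :
          MvPolynomial (Sym2 α) K) = 0 := by
  let tail (τ : Perm (Fin k)) := arcTail r (c ∘ τ) ε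
  let Follows (p : Perm (Fin k) × Perm α) : Prop :=
    ∀ j, p.2 (tail p.1 j) = arcHead r (c ∘ p.1) ε j
  let g (p : Perm (Fin k) × Perm α) : Perm (Fin k) × Perm α :=
    (p.1 * swap a b, p.2 * swap (tail p.1 a) (tail p.1 b))
  have hg : ∀ p, g (g p) = p := fun ⟨τ, σ⟩ => by
    simp only [g, tail, Prod.mk.injEq, mul_swap_mul_self, true_and]
    rw [← swap_arcTail_comp_swap (x := r) (y := c ∘ τ) hε]
    exact mul_swap_mul_self _ _ _
  have hfollows : ∀ p, Follows p → Follows (g p) := fun ⟨τ, _⟩ hp =>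
    arcTail_mul_swap_apply (h.sum_elim_comp_perm τ) hε hp
  have hprod : ∀ p : Perm (Fin k) × Perm α,
      ∏ i ∈ (univ.image (tail (g p).1))ᶜ, X s(i, (g p).2 i) =
        (∏ i ∈ (univ.image (tail p.1))ᶜ, X s(i, p.2 i) : MvPolynomial (Sym2 α) K) := by
    rintro ⟨τ, σ⟩
    refine prod_congr (congrArg compl (image_arcTail_comp_swap (x := r) (y := c ∘ τ) hε))
      fun i hi => ?_
    have hne : ∀ j, i ≠ tail τ j := fun j hij =>
      (mem_compl.1 hi) (hij ▸ mem_image_of_mem _ (mem_univ j))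
    simp only [g, Perm.coe_mul, comp_apply, swap_apply_of_ne_of_ne (hne a) (hne b)]
  rw [← Fintype.sum_prod_type']
  refine sum_ninvolution g (fun p => ?_) (fun p _ hgp => ?_) (fun _ => mem_univ _) hg
  · by_cases hp : Follows p
    · rw [if_pos hp, if_pos (hfollows p hp), hprod p]
      simp [g, tail, Perm.sign_mul, Perm.sign_swap hab]
    · have hgp : ¬ Follows (g p) := fun hgp => hp (hg p ▸ hfollows _ hgp)
      rw [if_neg hp, if_neg hgp, smul_zero, smul_zero, add_zero]
  · exact hab (mul_swap_eq_iff.1 (congrArg Prod.fst hgp))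

theorem pderivMinor_symPerm (hk : 2 < k) {r c : Fin k → α} (h : Injective (Sum.elim r c)) :
    pderivMinor r c (symPerm α K) = 0 := by
  calc pderivMinor r c (symPerm α K)
      = ∑ τ : Perm (Fin k), Perm.sign τ • ∑ ε : Fin k → Bool, ∑ σ : Perm α,
          if ∀ j, σ (arcTail r (c ∘ τ) ε j) = arcHead r (c ∘ τ) ε j then
            ∏ i ∈ (univ.image (arcTail r (c ∘ τ) ε))ᶜ, X s(i, σ i) else 0 := by
        rw [pderivMinor, LinearMap.sum_apply]
        exact sum_congr rfl fun τ _ => congrArg (Perm.sign τ • ·)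
          (iteratedPderiv_symPerm (h.sum_elim_comp_perm τ))
    _ = 0 := by
        simp only [smul_sum]
        rw [sum_comm]
        refine sum_eq_zero fun ε _ => ?_
        obtain ⟨a, b, hab, hε⟩ := Fintype.exists_ne_map_eq_of_card_lt ε (by simpa using hk)
        exact sum_sign_smul_arcs_eq_zero h hab hε

end SymmetricPermanent

theorem degree_three_annihilates_perm_six_general {K : Type*} [Field K] :
    pderiv s((0 : Fin 6), 4) (pderiv s((1 : Fin 6), 3) (pderiv s((2 : Fin 6), 5)
        (symPerm6 K)))
      - pderiv s((0 : Fin 6), 3) (pderiv s((1 : Fin 6), 4) (pderiv s((2 : Fin 6), 5)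
        (symPerm6 K)))
      - pderiv s((0 : Fin 6), 4) (pderiv s((1 : Fin 6), 2) (pderiv s((3 : Fin 6), 5)
        (symPerm6 K)))
      + pderiv s((0 : Fin 6), 2) (pderiv s((1 : Fin 6), 4) (pderiv s((3 : Fin 6), 5)
        (symPerm6 K)))
      + pderiv s((0 : Fin 6), 3) (pderiv s((1 : Fin 6), 2) (pderiv s((4 : Fin 6), 5)
        (symPerm6 K)))
      - pderiv s((0 : Fin 6), 2) (pderiv s((1 : Fin 6), 3) (pderiv s((4 : Fin 6), 5)
        (symPerm6 K))) = 0 := by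
  have h := pderivMinor_symPerm (α := Fin 6) (K := K) (by norm_num : 2 < 3) (r := ![0, 1, 5])
    (c := ![4, 3, 2]) (by decide)
  rw [pderivMinor, LinearMap.sum_apply, sum_univ_perm_fin_three] at h
  simp only [iteratedPderiv_fin_three_apply, Perm.sign_one, Perm.sign_mul, Perm.sign_swap',
    Perm.coe_one, Perm.coe_mul, id_eq, comp_apply, swap_apply_def, Matrix.cons_val_zero,
    Matrix.cons_val_one, Matrix.cons_val, Fin.reduceEq, ↓reduceIte, one_smul, Units.neg_smul,
    LinearMap.neg_apply, mul_neg, mul_one, neg_neg] at h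
  have hsym : symPerm6 K = symPerm (Fin 6) K := rfl
  rw [hsym, Sym2.eq_swap (a := (2 : Fin 6)), Sym2.eq_swap (a := (3 : Fin 6)),
    Sym2.eq_swap (a := (4 : Fin 6))]
  linear_combination h

/-- For the generic `6×6` symmetric matrix (with the paper's 1-based labels
`c = x₁₃, d = x₁₄, e = x₁₅, h = x₂₃, i = x₂₄, j = x₂₅, o = x₃₆, r = x₄₆, t = x₅₆`,
here 0-based pairs in `Sym2 (Fin 6)`), the degree-three operator
`EIO − DJO − EHR + CJR + DHT − CIT` annihilates `perm X`. -/
theorem degree_three_annihilates_perm_six {K : Type*} [Field K] [CharZero K] :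
    pderiv s((0 : Fin 6), 4) (pderiv s((1 : Fin 6), 3) (pderiv s((2 : Fin 6), 5)
        (symPerm6 K)))
      - pderiv s((0 : Fin 6), 3) (pderiv s((1 : Fin 6), 4) (pderiv s((2 : Fin 6), 5)
        (symPerm6 K)))
      - pderiv s((0 : Fin 6), 4) (pderiv s((1 : Fin 6), 2) (pderiv s((3 : Fin 6), 5)
        (symPerm6 K)))
      + pderiv s((0 : Fin 6), 2) (pderiv s((1 : Fin 6), 4) (pderiv s((3 : Fin 6), 5)
        (symPerm6 K)))
      + pderiv s((0 : Fin 6), 3) (pderiv s((1 : Fin 6), 2) (pderiv s((4 : Fin 6), 5)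
        (symPerm6 K)))
      - pderiv s((0 : Fin 6), 2) (pderiv s((1 : Fin 6), 3) (pderiv s((4 : Fin 6), 5)
        (symPerm6 K))) = 0 :=
  degree_three_annihilates_perm_six_general
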